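/- Over an algebraically closed field of characteristic 0, the variety in ℙ³ defined by x₀² + x₁² + x₂² + x₃² = 0 and −λ₁x₂² − λ₂x₃² = 0 with λ₁, λ₂ nonzero and distinct has exactly two singular points, namely (±i : 1 : 0 : 0) where i² = −1. -/

import Mathlib

/-!
The `2 × 2` minor of the Jacobian in the columns of `x₂, x₃` is `4 (λ₁ - λ₂) x₂ x₃`, so at a
singular point `x₂ x₃ = 0`, and then `λ₁ x₂² + λ₂ x₃² = 0` forces `x₂ = x₃ = 0`. What remains of
the first quadric is `x₀² + x₁² = (x₀ - i x₁)(x₀ + i x₁) = 0`. Conversely, on the line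
`x₂ = x₃ = 0` the second row of the Jacobian vanishes, so its rank is at most one.
-/

open MvPolynomial

theorem Matrix.det_submatrix_eq_zero_of_rank_lt {ι m n R : Type*} [Fintype m] [DecidableEq m]
    [Fintype n] [CommRing R] [IsDomain R] (A : Matrix ι n R) (r : m → ι) (c : m → n)
    (h : A.rank < Fintype.card m) : (A.submatrix r c).det = 0 := by
  by_contra hdet
  have := A.rank_submatrix_le r c
  rw [Matrix.rank_of_det_ne_zero hdet] at this
  omega

theorem sq_add_sq_eq_zero_iff {R : Type*} [CommRing R] [NoZeroDivisors R] {i : R}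
    (hi : i ^ 2 = -1) {a b : R} : a ^ 2 + b ^ 2 = 0 ↔ a = i * b ∨ a = -i * b := by
  have : a ^ 2 + b ^ 2 = (a - i * b) * (a + i * b) := by linear_combination b ^ 2 * hi
  rw [this, mul_eq_zero, sub_eq_zero, add_eq_zero_iff_eq_neg, neg_mul]

namespace QuadricIntersection

variable {K : Type*} [Field K] {lam₁ lam₂ : K}

theorem jacobian_eval_eq (x : Fin 4 → K) :
    (Matrix.of fun (r : Fin 2) (j : Fin 4) => eval x (pderiv j (if r = 0
      then X 0 ^ 2 + X 1 ^ 2 + X 2 ^ 2 + X 3 ^ 2 else - C lam₁ * X 2 ^ 2 - C lam₂ * X 3 ^ 2))) =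
      !![2 * x 0, 2 * x 1, 2 * x 2, 2 * x 3; 0, 0, -(2 * lam₁ * x 2), -(2 * lam₂ * x 3)] := by
  ext r j
  fin_cases r <;> fin_cases j <;> simp [pderiv_X] <;> ring

theorem singular_iff [NeZero (2 : K)] (h₁ : lam₁ ≠ 0) (h₂ : lam₂ ≠ 0) (h₁₂ : lam₁ ≠ lam₂)
    (x : Fin 4 → K) :
    (x 0 ^ 2 + x 1 ^ 2 + x 2 ^ 2 + x 3 ^ 2 = 0 ∧ -lam₁ * x 2 ^ 2 - lam₂ * x 3 ^ 2 = 0 ∧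
      (!![2 * x 0, 2 * x 1, 2 * x 2, 2 * x 3;
        0, 0, -(2 * lam₁ * x 2), -(2 * lam₂ * x 3)] : Matrix (Fin 2) (Fin 4) K).rank < 2) ↔
      x 2 = 0 ∧ x 3 = 0 ∧ x 0 ^ 2 + x 1 ^ 2 = 0 := by
  constructor
  · rintro ⟨hQ₁, hQ₂, hrank⟩
    have hminor := Matrix.det_submatrix_eq_zero_of_rank_lt _ ![0, 1] ![2, 3] hrank
    rw [Matrix.det_fin_two] at hminor
    simp only [Matrix.submatrix_apply, Matrix.of_apply, Matrix.cons_val, Matrix.cons_val_zero,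
      Matrix.cons_val_one] at hminor
    have h23 : x 2 * x 3 = 0 := by
      have : (2 * 2 * (lam₁ - lam₂)) * (x 2 * x 3) = 0 := by linear_combination hminor
      exact (mul_eq_zero.1 this).resolve_left
        (mul_ne_zero (mul_ne_zero two_ne_zero two_ne_zero) (sub_ne_zero.2 h₁₂))
    obtain ⟨h2, h3⟩ : x 2 = 0 ∧ x 3 = 0 := by
      rcases mul_eq_zero.1 h23 with h2 | h3
      · rw [h2] at hQ₂
        exact ⟨h2, by simpa [h₂] using hQ₂⟩
      · rw [h3] at hQ₂
        exact ⟨by simpa [h₁] using hQ₂, h3⟩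
    rw [h2, h3] at hQ₁
    exact ⟨h2, h3, by linear_combination hQ₁⟩
  · rintro ⟨h2, h3, h01⟩
    refine ⟨by rw [h2, h3]; linear_combination h01, by rw [h2, h3]; ring, ?_⟩
    have : !![2 * x 0, 2 * x 1, 2 * x 2, 2 * x 3; 0, 0, -(2 * lam₁ * x 2), -(2 * lam₂ * x 3)] =
        Matrix.vecMulVec ![1, 0] ![2 * x 0, 2 * x 1, 0, 0] := by
      ext r j
      fin_cases r <;> fin_cases j <;> simp [Matrix.vecMulVec, h2, h3]
    rw [this]
    exact (Matrix.rank_vecMulVec_le _ _).trans_lt one_lt_two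

theorem sq_add_sq_eq_zero_iff_exists_smul {i : K} (hi : i ^ 2 = -1) {x : Fin 4 → K} (hx : x ≠ 0) :
    (x 2 = 0 ∧ x 3 = 0 ∧ x 0 ^ 2 + x 1 ^ 2 = 0) ↔
      ∃ t : K, t ≠ 0 ∧ (x = t • ![i, 1, 0, 0] ∨ x = t • ![-i, 1, 0, 0]) := by
  constructor
  · rintro ⟨h2, h3, h01⟩
    have h1 : x 1 ≠ 0 := by
      rintro h1
      have h0 : x 0 = 0 := by simpa [h1] using h01
      exact hx (funext fun j => by fin_cases j <;> assumption)
    refine ⟨x 1, h1, ?_⟩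
    rcases (sq_add_sq_eq_zero_iff hi).1 h01 with h0 | h0 <;> [left; right] <;>
      ext j <;> fin_cases j <;> simp [h0, h2, h3, mul_comm]
  · rintro ⟨t, -, rfl | rfl⟩ <;>
      simp only [Pi.smul_apply, Matrix.cons_val, smul_eq_mul, mul_zero, mul_one, true_and] <;>
      linear_combination t ^ 2 * hi

end QuadricIntersection

theorem stmt7_general {K : Type*} [Field K] [CharZero K]
    (lam₁ lam₂ : K) (h₁ : lam₁ ≠ 0) (h₂ : lam₂ ≠ 0) (h₁₂ : lam₁ ≠ lam₂)
    (i : K) (hi : i ^ 2 = -1)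
    (Q₁ Q₂ : MvPolynomial (Fin 4) K)
    (hQ₁ : Q₁ = X 0 ^ 2 + X 1 ^ 2 + X 2 ^ 2 + X 3 ^ 2)
    (hQ₂ : Q₂ = - C lam₁ * X 2 ^ 2 - C lam₂ * X 3 ^ 2) :
    ∀ x : Fin 4 → K, x ≠ 0 →
      ((eval x Q₁ = 0 ∧ eval x Q₂ = 0 ∧
        (Matrix.of fun (r : Fin 2) (j : Fin 4) =>
          eval x (pderiv j (if r = 0 then Q₁ else Q₂))).rank < 2) ↔
        (∃ t : K, t ≠ 0 ∧ (x = t • ![i, 1, 0, 0] ∨ x = t • ![-i, 1, 0, 0]))) := by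
  intro x hx
  subst hQ₁ hQ₂
  rw [QuadricIntersection.jacobian_eval_eq, ← QuadricIntersection.sq_add_sq_eq_zero_iff_exists_smul hi hx,
    ← QuadricIntersection.singular_iff h₁ h₂ h₁₂]
  simp only [eval_add, eval_sub, eval_mul, eval_neg, eval_pow, eval_X, eval_C]

/-- Over an algebraically closed field of characteristic zero, the intersection in `ℙ³`
of the quadrics `x₀² + x₁² + x₂² + x₃² = 0` and `-λ₁x₂² - λ₂x₃² = 0` (with `λ₁, λ₂`
nonzero and distinct) has exactly two singular points, namely `(± i : 1 : 0 : 0)`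
where `i² = -1`: a nonzero `x` represents a singular point of the intersection
(i.e. lies on both quadrics with the `2 × 4` Jacobian of rank `< 2`) iff it is a
scalar multiple of `(i, 1, 0, 0)` or of `(-i, 1, 0, 0)`. -/
theorem stmt7 {K : Type*} [Field K] [IsAlgClosed K] [CharZero K]
    (lam₁ lam₂ : K) (h₁ : lam₁ ≠ 0) (h₂ : lam₂ ≠ 0) (h₁₂ : lam₁ ≠ lam₂)
    (i : K) (hi : i ^ 2 = -1)
    (Q₁ Q₂ : MvPolynomial (Fin 4) K)
    (hQ₁ : Q₁ = X 0 ^ 2 + X 1 ^ 2 + X 2 ^ 2 + X 3 ^ 2)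
    (hQ₂ : Q₂ = - C lam₁ * X 2 ^ 2 - C lam₂ * X 3 ^ 2) :
    ∀ x : Fin 4 → K, x ≠ 0 →
      ((eval x Q₁ = 0 ∧ eval x Q₂ = 0 ∧
        (Matrix.of fun (r : Fin 2) (j : Fin 4) =>
          eval x (pderiv j (if r = 0 then Q₁ else Q₂))).rank < 2) ↔
        (∃ t : K, t ≠ 0 ∧ (x = t • ![i, 1, 0, 0] ∨ x = t • ![-i, 1, 0, 0]))) :=
  stmt7_general lam₁ lam₂ h₁ h₂ h₁₂ i hi Q₁ Q₂ hQ₁ hQ₂
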